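/- Let u : ℝ² → ℝ be measurable, λ > 0, and suppose K := ∫_{ℝ²}(e^{λu²} − 1) dx < ∞. Then for all T > 0 and all t ∈ (0, T], λ (u*(t))² ≤ K/T + log(T/t). Consequently sup_{T>0} sup_{0<t≤T} u*(t)/√(4π/T + log(T/t)) ≤ (1/√λ) max{1, √(K/(4π))}. -/

import Mathlib

/-!
Chebyshev's inequality for the integrand `e^{λu²} − 1` shows that `|u| > s` on a set of measure
at most `K / (e^{λs²} − 1)`, so `λ u*(t)² ≤ log (1 + K/t)`. Writing `1 + K/t = (T/t) · (t + K)/T`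
and using `log x ≤ x − 1` with `t ≤ T` gives `λ u*(t)² ≤ K/T + log (T/t)`; the quasinorm bound
follows from `K/T ≤ (K/4π) · 4π/T`.
-/

open MeasureTheory Real

/-- The decreasing rearrangement of a function on `ℝ²`. -/
noncomputable def decRearr (u : EuclideanSpace ℝ (Fin 2) → ℝ) (t : ℝ) : ℝ :=
  sInf {s : ℝ | 0 ≤ s ∧ volume {x : EuclideanSpace ℝ (Fin 2) | s < |u x|} ≤ ENNReal.ofReal t}

lemma exp_mul_sq_sub_one_nonneg {lam : ℝ} (hlam : 0 ≤ lam) (x : ℝ) :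
    0 ≤ exp (lam * x ^ 2) - 1 :=
  sub_nonneg.2 (one_le_exp (by positivity))

section Chebyshev

variable {α : Type*} [MeasurableSpace α] {μ : Measure α} {u : α → ℝ} {lam s : ℝ}

lemma ofReal_exp_sub_one_mul_measure_le_integral (hlam : 0 ≤ lam)
    (hint : Integrable (fun x => exp (lam * u x ^ 2) - 1) μ) (hs : 0 ≤ s) :
    ENNReal.ofReal (exp (lam * s ^ 2) - 1) * μ {x | s < |u x|} ≤
      ENNReal.ofReal (∫ x, (exp (lam * u x ^ 2) - 1) ∂μ) := by
  rw [ofReal_integral_eq_lintegral_ofReal hint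
    (ae_of_all _ fun x => exp_mul_sq_sub_one_nonneg hlam (u x))]
  refine le_trans (mul_le_mul_right (measure_mono fun x (hx : s < |u x|) => ?_) _)
    (mul_meas_ge_le_lintegral₀ hint.aemeasurable.ennreal_ofReal _)
  have hsq : s ^ 2 ≤ u x ^ 2 := sq_le_sq.2 ((abs_of_nonneg hs).trans_le hx.le)
  exact ENNReal.ofReal_le_ofReal (by gcongr)

lemma measure_lt_abs_le_ofReal (hlam : 0 ≤ lam)
    (hint : Integrable (fun x => exp (lam * u x ^ 2) - 1) μ) (hs : 0 ≤ s) {t : ℝ}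
    (hc : 0 < exp (lam * s ^ 2) - 1)
    (hK : ∫ x, (exp (lam * u x ^ 2) - 1) ∂μ ≤ t * (exp (lam * s ^ 2) - 1)) :
    μ {x | s < |u x|} ≤ ENNReal.ofReal t := by
  have hcheb := ofReal_exp_sub_one_mul_measure_le_integral hlam hint hs
  rw [mul_comm, ← ENNReal.le_div_iff_mul_le (Or.inl (ENNReal.ofReal_pos.2 hc).ne')
    (Or.inl ENNReal.ofReal_ne_top), ← ENNReal.ofReal_div_of_pos hc] at hcheb
  exact hcheb.trans (ENNReal.ofReal_le_ofReal ((div_le_iff₀ hc).2 hK))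

end Chebyshev

lemma decRearr_nonneg (u : EuclideanSpace ℝ (Fin 2) → ℝ) (t : ℝ) : 0 ≤ decRearr u t :=
  Real.sInf_nonneg fun _ hx => hx.1

lemma decRearr_le {u : EuclideanSpace ℝ (Fin 2) → ℝ} {t s : ℝ} (hs : 0 ≤ s)
    (h : volume {x : EuclideanSpace ℝ (Fin 2) | s < |u x|} ≤ ENNReal.ofReal t) :
    decRearr u t ≤ s :=
  csInf_le ⟨0, fun _ hx => hx.1⟩ ⟨hs, h⟩

lemma mul_decRearr_sq_le_log_one_add {u : EuclideanSpace ℝ (Fin 2) → ℝ} {lam t : ℝ}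
    (hlam : 0 < lam) (hint : Integrable (fun x => exp (lam * u x ^ 2) - 1)) (ht : 0 < t) :
    lam * decRearr u t ^ 2 ≤ log (1 + (∫ x, (exp (lam * u x ^ 2) - 1)) / t) := by
  set K := ∫ x, (exp (lam * u x ^ 2) - 1)
  have hKt : 0 ≤ K / t := div_nonneg (integral_nonneg fun x => exp_mul_sq_sub_one_nonneg hlam.le (u x)) ht.le
  refine le_of_forall_gt_imp_ge_of_dense fun b hb => ?_
  have hexp : K / t < exp b - 1 := by
    rw [log_lt_iff_lt_exp (by positivity)] at hb
    linarith
  set s := sqrt (b / lam)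
  have hs : lam * s ^ 2 = b := by
    rw [sq_sqrt (div_nonneg (hb.le.trans' (log_nonneg (by linarith))) hlam.le)]
    field_simp
  have hmeas : volume {x | s < |u x|} ≤ ENNReal.ofReal t :=
    measure_lt_abs_le_ofReal hlam.le hint (sqrt_nonneg _) (by rw [hs]; linarith)
      (by rw [hs]; exact ((div_lt_iff₀' ht).1 hexp).le)
  calc lam * decRearr u t ^ 2 ≤ lam * s ^ 2 := by
        gcongr
        exacts [decRearr_nonneg u t, decRearr_le (sqrt_nonneg _) hmeas]
    _ = b := hs

lemma log_one_add_div_le_div_add_log {K t T : ℝ} (hK : 0 ≤ K) (ht : 0 < t) (htT : t ≤ T) :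
    log (1 + K / t) ≤ K / T + log (T / t) := by
  have hT : 0 < T := ht.trans_le htT
  have hsplit : 1 + K / t = (t + K) / T * (T / t) := by field_simp
  have hlog : log ((t + K) / T) ≤ K / T :=
    calc log ((t + K) / T) ≤ (t + K) / T - 1 := log_le_sub_one_of_pos (by positivity)
      _ = (t + K - T) / T := by rw [div_sub_one hT.ne']
      _ ≤ K / T := by gcongr; linarith
  rw [hsplit, log_mul (by positivity) (by positivity)]
  linarith

lemma div_add_le_max_one_sqrt_sq_mul {K L a T : ℝ} (hL : 0 ≤ L) (ha : 0 < a) (hT : 0 < T) :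
    K / T + L ≤ max 1 (sqrt (K / a)) ^ 2 * (a / T + L) := by
  set M := max 1 (sqrt (K / a))
  have hM1 : 1 ≤ M := le_max_left _ _
  have hKa : K / a ≤ M ^ 2 := (sqrt_le_left (zero_le_one.trans hM1)).1 (le_max_right _ _)
  calc K / T + L = K / a * (a / T) + L := by field_simp
    _ ≤ M ^ 2 * (a / T) + M ^ 2 * L := by
        gcongr
        exact le_mul_of_one_le_left hL (one_le_pow₀ hM1)
    _ = M ^ 2 * (a / T + L) := by ring

lemma div_sqrt_le_of_mul_sq_le {lam x M D : ℝ} (hlam : 0 < lam) (hx : 0 ≤ x) (hM : 0 ≤ M)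
    (hD : 0 < D) (h : lam * x ^ 2 ≤ M ^ 2 * D) :
    x / sqrt D ≤ 1 / sqrt lam * M := by
  have hsq : x ^ 2 ≤ M ^ 2 * D / lam := (le_div_iff₀' hlam).2 h
  rw [div_le_iff₀ (sqrt_pos.2 hD)]
  calc x = sqrt (x ^ 2) := (sqrt_sq hx).symm
    _ ≤ sqrt (M ^ 2 * D / lam) := sqrt_le_sqrt hsq
    _ = 1 / sqrt lam * M * sqrt D := by
        rw [sqrt_div' _ hlam.le, sqrt_mul (sq_nonneg M), sqrt_sq hM]
        ring

theorem zygmund_quasinorm_bound_of_exp_integral_general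
    (u : EuclideanSpace ℝ (Fin 2) → ℝ)
    (lam : ℝ) (hlam : 0 < lam)
    (hint : Integrable (fun x => Real.exp (lam * (u x) ^ 2) - 1)
      (volume : Measure (EuclideanSpace ℝ (Fin 2))))
    (K : ℝ) (hK : K = ∫ x, (Real.exp (lam * (u x) ^ 2) - 1) ∂volume) :
    (∀ T : ℝ, 0 < T → ∀ t : ℝ, 0 < t → t ≤ T →
      lam * (decRearr u t) ^ 2 ≤ K / T + Real.log (T / t)) ∧
    (∀ T : ℝ, 0 < T → ∀ t : ℝ, 0 < t → t ≤ T →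
      decRearr u t / Real.sqrt (4 * π / T + Real.log (T / t)) ≤
        (1 / Real.sqrt lam) * max 1 (Real.sqrt (K / (4 * π)))) := by
  have hK0 : 0 ≤ K := hK ▸ integral_nonneg fun x => exp_mul_sq_sub_one_nonneg hlam.le (u x)
  have bound : ∀ T : ℝ, 0 < T → ∀ t : ℝ, 0 < t → t ≤ T →
      lam * decRearr u t ^ 2 ≤ K / T + log (T / t) := fun T _ t ht htT =>
    (hK ▸ mul_decRearr_sq_le_log_one_add hlam hint ht).trans
      (log_one_add_div_le_div_add_log hK0 ht htT)
  refine ⟨bound, fun T hT t ht htT => ?_⟩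
  have hlog : 0 ≤ log (T / t) := log_nonneg ((one_le_div ht).2 htT)
  exact div_sqrt_le_of_mul_sq_le hlam (decRearr_nonneg u t) (by positivity) (by positivity)
    ((bound T hT t ht htT).trans (div_add_le_max_one_sqrt_sq_mul hlog (by positivity) hT))

/-- If `K = ∫(e^{λu²} − 1) < ∞` then `λ(u*(t))² ≤ K/T + log(T/t)` for `0 < t ≤ T`,
and consequently `u*(t)/√(4π/T + log(T/t)) ≤ (1/√λ)·max{1, √(K/4π)}`. -/
theorem zygmund_quasinorm_bound_of_exp_integral
    (u : EuclideanSpace ℝ (Fin 2) → ℝ) (hu : Measurable u)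
    (lam : ℝ) (hlam : 0 < lam)
    (hint : Integrable (fun x => Real.exp (lam * (u x) ^ 2) - 1)
      (volume : Measure (EuclideanSpace ℝ (Fin 2))))
    (K : ℝ) (hK : K = ∫ x, (Real.exp (lam * (u x) ^ 2) - 1) ∂volume) :
    (∀ T : ℝ, 0 < T → ∀ t : ℝ, 0 < t → t ≤ T →
      lam * (decRearr u t) ^ 2 ≤ K / T + Real.log (T / t)) ∧
    (∀ T : ℝ, 0 < T → ∀ t : ℝ, 0 < t → t ≤ T →
      decRearr u t / Real.sqrt (4 * π / T + Real.log (T / t)) ≤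
        (1 / Real.sqrt lam) * max 1 (Real.sqrt (K / (4 * π)))) :=
  zygmund_quasinorm_bound_of_exp_integral_general u lam hlam hint K hK
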